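/- Let G be a loopless multigraph with maximum degree Δ, let M be a maximal matching of G, and let G′ = G − M be the multigraph obtained by removing M from G. Then no two vertices that both have degree Δ in G′ are adjacent in the support of G′; that is, the set of vertices of degree Δ in G′ is an independent set of the support of G′. -/

import Mathlib

open scoped Classical

namespace NSBPaper

variable {V : Type} [Fintype V] [DecidableEq V]

/-- Degree of a vertex in a loopless multigraph given by multiplicity function `w`. -/
def deg (w : V → V → ℕ) (v : V) : ℕ := ∑ u, w v u

/-- Maximum degree of the multigraph. -/
def maxDeg (w : V → V → ℕ) : ℕ := Finset.univ.sup fun v => deg w v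

/-- The support simple graph of a multigraph: `u` and `v` are adjacent iff `u ≠ v`
and there is at least one multi-edge between them. -/
def support (w : V → V → ℕ) : SimpleGraph V where
  Adj u v := u ≠ v ∧ 1 ≤ w u v ∧ 1 ≤ w v u
  symm := ⟨fun u v h => ⟨h.1.symm, h.2.2, h.2.1⟩⟩
  loopless := ⟨fun v h => h.1 rfl⟩

/-- A set of unordered pairs `M` saturates a vertex `v` if some pair of `M` contains `v`. -/
def Saturates (M : Finset (Sym2 V)) (v : V) : Prop := ∃ e ∈ M, v ∈ e

/-- `M` is a matching of the multigraph `w`: its elements are non-loop edges of the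
support, and no two distinct elements share a vertex. -/
def IsMatching (w : V → V → ℕ) (M : Finset (Sym2 V)) : Prop :=
  (∀ e ∈ M, ¬ e.IsDiag) ∧
  (∀ u v : V, s(u, v) ∈ M → 1 ≤ w u v) ∧
  (∀ e ∈ M, ∀ f ∈ M, e ≠ f → ∀ x : V, x ∈ e → x ∉ f)

/-- `M` is a maximal matching of `w`: no pair can be added keeping it a matching. -/
def IsMaximalMatching (w : V → V → ℕ) (M : Finset (Sym2 V)) : Prop :=
  IsMatching w M ∧ ∀ e : Sym2 V, e ∉ M → ¬ IsMatching w (insert e M)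

/-- Removing a matching `M` from the multigraph `w`: the multiplicity of each pair in `M`
decreases by one. -/
def removeMatching (w : V → V → ℕ) (M : Finset (Sym2 V)) : V → V → ℕ :=
  fun u v => if s(u, v) ∈ M then w u v - 1 else w u v

/-- The subgraph of `G` induced by `Z` is bipartite: there is a set `A` such that every
edge of `G` inside `Z` joins `A` to its complement. -/
def BipartiteOn (G : SimpleGraph V) (Z : Set V) : Prop :=
  ∃ A : Set V, ∀ ⦃u v : V⦄, u ∈ Z → v ∈ Z → G.Adj u v → (u ∈ A ↔ v ∉ A)

/-- The edge multiset of `w` can be partitioned into `T` matchings. -/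
def CanEvacuate (w : V → V → ℕ) (T : ℕ) : Prop :=
  ∃ M : Fin T → Finset (Sym2 V),
    (∀ j, IsMatching w (M j)) ∧
    ∀ u v : V, (Finset.univ.filter fun j => s(u, v) ∈ M j).card = w u v

/-- The vertex-weight of a matching: the sum of the weights of its saturated vertices. -/
noncomputable def matchWeight (φ : V → ℕ) (M : Finset (Sym2 V)) : ℕ :=
  ∑ v : V, if Saturates M v then φ v else 0

/-- `Rfun M k i = 1` iff vertex `i` is saturated by the matching chosen in slot `k`. -/
noncomputable def Rfun (M : ℕ → Finset (Sym2 V)) (k : ℕ) (i : V) : ℕ :=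
  if Saturates (M k) i then 1 else 0

/-- `Ufun M k i` is `R i (k-1) * R i (k-2)` if `k ≡ 2 [MOD 3]` and `R i (k-1)` otherwise,
with `R i k = 0` for `k < 0`. -/
noncomputable def Ufun (M : ℕ → Finset (Sym2 V)) (k : ℕ) (i : V) : ℕ :=
  if k = 0 then 0
  else if k % 3 = 2 then Rfun M (k - 1) i * Rfun M (k - 2) i
  else Rfun M (k - 1) i

/-- Vertex `i` is heavy in `w`: `n * d(i) ≥ (n - 1) * Δ`. -/
def Heavy (w : V → V → ℕ) (i : V) : Prop :=
  (Fintype.card V - 1) * maxDeg w ≤ Fintype.card V * deg w i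

/-- Vertex `i` is critical in `w`: its degree is the maximum degree. -/
def Critical (w : V → V → ℕ) (i : V) : Prop := deg w i = maxDeg w

/-- The NSB weight of vertex `i`, where `u i` records whether `i` received enough
service previously. -/
noncomputable def nsbWeight (w : V → V → ℕ) (u : V → ℕ) (i : V) : ℕ :=
  if Heavy w i then deg w i * (2 - u i) else deg w i

/-- The LC-NSB weight of vertex `i`. -/
noncomputable def lcnsbWeight (w : V → V → ℕ) (u : V → ℕ) (i : V) : ℕ :=
  if Critical w i then 5 - 2 * u i
  else if Heavy w i then 4 - 2 * u i
  else 1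

/-- An NSB evacuation run on the initial multigraph `w0`: in each slot `k`, a matching
`M k` of `G k` maximizing the total NSB weight of saturated vertices is removed. -/
structure NSBRun (w0 : V → V → ℕ) where
  G : ℕ → V → V → ℕ
  M : ℕ → Finset (Sym2 V)
  init : G 0 = w0
  step : ∀ k, G (k + 1) = removeMatching (G k) (M k)
  matching : ∀ k, IsMatching (G k) (M k)
  opt : ∀ k, ∀ M' : Finset (Sym2 V), IsMatching (G k) M' →
    matchWeight (nsbWeight (G k) (Ufun M k)) M' ≤ matchWeight (nsbWeight (G k) (Ufun M k)) (M k)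

/-- An LC-NSB evacuation run on the initial multigraph `w0`. -/
structure LCNSBRun (w0 : V → V → ℕ) where
  G : ℕ → V → V → ℕ
  M : ℕ → Finset (Sym2 V)
  init : G 0 = w0
  step : ∀ k, G (k + 1) = removeMatching (G k) (M k)
  matching : ∀ k, IsMatching (G k) (M k)
  opt : ∀ k, ∀ M' : Finset (Sym2 V), IsMatching (G k) M' →
    matchWeight (lcnsbWeight (G k) (Ufun M k)) M' ≤
      matchWeight (lcnsbWeight (G k) (Ufun M k)) (M k)


end NSBPaper

/-!
A vertex covered by `M` loses at least one edge, so a vertex that still has degree `Δ` in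
`G − M` is not covered by `M`. Two adjacent uncovered vertices would let the edge between them
be added to `M`, contradicting maximality.
-/

namespace NSBPaper

variable {V : Type} {w : V → V → ℕ} {M : Finset (Sym2 V)} {u v : V}

lemma Saturates.exists_mk_mem (h : Saturates M u) : ∃ x, s(u, x) ∈ M := by
  obtain ⟨e, he, hue⟩ := h
  obtain ⟨x, rfl⟩ := Sym2.mem_iff_exists.mp hue
  exact ⟨x, he⟩

lemma deg_le_maxDeg [Fintype V] (w : V → V → ℕ) (u : V) : deg w u ≤ maxDeg w :=
  Finset.le_sup (Finset.mem_univ u)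

section

variable [DecidableEq V]

lemma IsMatching.insert_mk (hM : IsMatching w M) (hadj : (support w).Adj u v)
    (hu : ¬ Saturates M u) (hv : ¬ Saturates M v) : IsMatching w (insert s(u, v) M) := by
  obtain ⟨hne, huv, hvu⟩ := hadj
  have hfree : ∀ f ∈ M, ∀ x ∈ s(u, v), x ∉ f := by
    intro f hf x hx hxf
    rcases Sym2.mem_iff.mp hx with rfl | rfl
    exacts [hu ⟨f, hf, hxf⟩, hv ⟨f, hf, hxf⟩]
  refine ⟨?_, ?_, ?_⟩
  · intro e he
    rcases Finset.mem_insert.mp he with rfl | he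
    exacts [Sym2.mk_isDiag_iff.not.mpr hne, hM.1 e he]
  · intro a b hab
    rcases Finset.mem_insert.mp hab with h | h
    · rcases Sym2.eq_iff.mp h with ⟨rfl, rfl⟩ | ⟨rfl, rfl⟩
      exacts [huv, hvu]
    · exact hM.2.1 a b h
  · intro e he f hf hef x hxe hxf
    rcases Finset.mem_insert.mp he with rfl | he <;> rcases Finset.mem_insert.mp hf with rfl | hf
    · exact hef rfl
    · exact hfree f hf x hxe hxf
    · exact hfree e he x hxf hxe
    · exact hM.2.2 e he f hf hef x hxe hxf

lemma IsMaximalMatching.saturates_or_saturates (hM : IsMaximalMatching w M)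
    (hadj : (support w).Adj u v) : Saturates M u ∨ Saturates M v := by
  by_contra! h
  have hnotM : s(u, v) ∉ M := fun huv => h.1 ⟨_, huv, Sym2.mem_mk_left u v⟩
  exact hM.2 _ hnotM (hM.1.insert_mk hadj h.1 h.2)

lemma removeMatching_le (w : V → V → ℕ) (M : Finset (Sym2 V)) (u v : V) :
    removeMatching w M u v ≤ w u v := by
  unfold removeMatching
  split <;> omega

lemma support_removeMatching_le (w : V → V → ℕ) (M : Finset (Sym2 V)) :
    support (removeMatching w M) ≤ support w :=
  fun _ _ ⟨hne, huv, hvu⟩ =>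
    ⟨hne, huv.trans (removeMatching_le w M _ _), hvu.trans (removeMatching_le w M _ _)⟩

variable [Fintype V]

lemma IsMatching.deg_removeMatching_lt (hM : IsMatching w M) (hu : Saturates M u) :
    deg (removeMatching w M) u < deg w u := by
  obtain ⟨x, hx⟩ := hu.exists_mk_mem
  refine Finset.sum_lt_sum (fun y _ => removeMatching_le w M u y) ⟨x, Finset.mem_univ x, ?_⟩
  have hpos : 1 ≤ w u x := hM.2.1 u x hx
  simp only [removeMatching, if_pos hx]
  omega

lemma IsMatching.not_saturates_of_deg_removeMatching_eq_maxDeg (hM : IsMatching w M)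
    (hu : deg (removeMatching w M) u = maxDeg w) : ¬ Saturates M u := fun hs =>
  (hM.deg_removeMatching_lt hs).not_ge (hu ▸ deg_le_maxDeg w u)

end

theorem maximal_matching_maxdeg_indep_general {V : Type} [Fintype V] [DecidableEq V]
    (w : V → V → ℕ)
    (M : Finset (Sym2 V)) (hM : IsMaximalMatching w M) :
    ∀ u v : V, deg (removeMatching w M) u = maxDeg w →
      deg (removeMatching w M) v = maxDeg w →
      ¬ (support (removeMatching w M)).Adj u v := by
  intro u v hu hv hadj
  rcases hM.saturates_or_saturates (support_removeMatching_le w M hadj) with hs | hs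
  · exact hM.1.not_saturates_of_deg_removeMatching_eq_maxDeg hu hs
  · exact hM.1.not_saturates_of_deg_removeMatching_eq_maxDeg hv hs

/-- After removing a maximal matching `M` from `G`, the vertices that still
have degree `Δ` (the maximum degree of `G`) form an independent set of the support of
`G − M`. -/
theorem maximal_matching_maxdeg_indep {V : Type} [Fintype V] [DecidableEq V]
    (w : V → V → ℕ) (hsymm : ∀ u v, w u v = w v u) (hloop : ∀ v, w v v = 0)
    (M : Finset (Sym2 V)) (hM : IsMaximalMatching w M) :
    ∀ u v : V, deg (removeMatching w M) u = maxDeg w →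
      deg (removeMatching w M) v = maxDeg w →
      ¬ (support (removeMatching w M)).Adj u v :=
  maximal_matching_maxdeg_indep_general w M hM

end NSBPaper
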